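/- Let μ be a probability measure on ℝ² with continuous marginal cumulative distribution functions F_X and F_Y and support S. If the absolutely continuous component of μ with respect to two-dimensional Lebesgue measure λ₂ is nonzero, then there do not exist functions f : ℝ → ℝ and g : ℝ → ℝ and a constant c such that F_X(x)·F_Y(y) − f(x) − g(y) = c for all (x,y) ∈ S. -/

import Mathlib

/-!
Write `ρ` for the Lebesgue density of `μac`. The part `P` of `S` where `ρ > 0` has positive area,
and every piece of `P` of positive area has positive `μ`-mass. By the Lebesgue density theorem
there is a square in which `P` has density above `1/2`; by Fubini two vertical sections of `P`
in that square then overlap in positive length. This yields `x₁ < x₂` and `y₁ < y₂` with the four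
corners `(xᵢ, yⱼ)` in `P`, and choosing `(x₁, y₁)` to be a density point of `P` also gives the
open rectangle `(x₁, x₂) × (y₁, y₂)` positive `μ`-mass, so that `F_X(x₁) < F_X(x₂)` and
`F_Y(y₁) < F_Y(y₂)`. The alternating sum of `F_X F_Y - f - g` over the four corners is
`(F_X(x₂) - F_X(x₁)) (F_Y(y₂) - F_Y(y₁)) > 0`, so this function is not constant on `S`.
-/

open MeasureTheory Set Filter Topology Metric
open scoped ENNReal

theorem measure_inter_ne_zero_of_lt_add {α : Type*} [MeasurableSpace α] {μ : Measure α}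
    {s t u : Set α} (ht : MeasurableSet t) (htu : t ⊆ u) (h : μ u < μ t + μ (s ∩ u)) :
    μ (s ∩ t) ≠ 0 := by
  intro h0
  have hsu : μ (s ∩ u) ≤ μ (u \ t) :=
    calc μ (s ∩ u) ≤ μ (u \ t ∪ s ∩ t) := measure_mono fun x hx => by
          by_cases hxt : x ∈ t
          exacts [Or.inr ⟨hx.1, hxt⟩, Or.inl ⟨hx.2, hxt⟩]
      _ ≤ μ (u \ t) := (measure_union_le _ _).trans (by rw [h0, add_zero])
  have hu : μ t + μ (u \ t) = μ u := by
    rw [measure_add_sdiff ht.nullMeasurableSet, union_eq_right.2 htu]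
  exact h.not_ge (by rw [← hu]; gcongr)

theorem exists_lt_of_measure_ne_zero {α : Type*} [MeasurableSpace α] [LinearOrder α]
    {μ : Measure α} [NullSingletonClass μ] {s : Set α} (h : μ s ≠ 0) :
    ∃ x ∈ s, ∃ y ∈ s, x < y := by
  by_contra! H
  exact h (Subsingleton.measure_zero
    (fun x hx y hy => le_antisymm (H y hy x hx) (H x hx y hy)) μ)

theorem toReal_measure_Iic_lt_of_measure_Ioo_ne_zero {ν : Measure ℝ} [IsFiniteMeasure ν]
    {a b : ℝ} (h : ν (Ioo a b) ≠ 0) : (ν (Iic a)).toReal < (ν (Iic b)).toReal := by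
  have hab : a ≤ b := (nonempty_Ioo.1 (nonempty_of_measure_ne_zero h)).le
  rw [ENNReal.toReal_lt_toReal (measure_ne_top _ _) (measure_ne_top _ _),
    ← Iic_union_Ioc_eq_Iic hab, measure_union (Iic_disjoint_Ioc le_rfl) measurableSet_Ioc]
  exact ENNReal.lt_add_right (measure_ne_top _ _)
    fun h0 => h (measure_mono_null Ioo_subset_Ioc_self h0)

theorem Measure.exists_subset_restrict_absolutelyContinuous {α : Type*} [MeasurableSpace α]
    {μ ν : Measure α} [ν.HaveLebesgueDecomposition μ] (hνμ : ν ≪ μ) (hν : ν ≠ 0)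
    {S : Set α} (hS : MeasurableSet S) (hνS : ν Sᶜ = 0) :
    ∃ P ⊆ S, MeasurableSet P ∧ μ P ≠ 0 ∧ μ.restrict P ≪ ν := by
  have hρ := Measure.measurable_rnDeriv ν μ
  have hzero (U : Set α) : ν U = 0 ↔ μ ({x | ν.rnDeriv μ x ≠ 0} ∩ U) = 0 := by
    rw [← withDensity_apply_eq_zero' hρ.aemeasurable, Measure.withDensity_rnDeriv_eq ν μ hνμ]
  have hP : MeasurableSet ({x | ν.rnDeriv μ x ≠ 0} ∩ S) :=
    (hρ (measurableSet_singleton 0).compl).inter hS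
  refine ⟨_, inter_subset_right, hP, fun h0 => hν ?_, fun U hU => ?_⟩
  · rw [← Measure.measure_univ_eq_zero, ← nonpos_iff_eq_zero]
    exact (measure_univ_le_add_compl S).trans (by rw [(hzero S).2 h0, hνS, add_zero])
  · rw [Measure.restrict_apply' hP, inter_comm]
    exact measure_mono_null (inter_subset_inter_left _ inter_subset_left) ((hzero U).1 hU)

section DensityPoint

variable {α : Type*} [MetricSpace α] [MeasurableSpace α] {μ : Measure α} {s t : Set α} {x : α}

def IsDensityPoint (μ : Measure α) (s : Set α) (x : α) : Prop :=
  Tendsto (fun r => μ (s ∩ closedBall x r) / μ (closedBall x r)) (𝓝[>] 0) (𝓝 1)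

theorem IsDensityPoint.congr_ae (h : IsDensityPoint μ s x) (hst : s =ᵐ[μ] t) :
    IsDensityPoint μ t x := by
  refine Tendsto.congr (fun r => ?_) h
  rw [measure_congr (hst.inter (ae_eq_refl (closedBall x r)))]

theorem IsDensityPoint.exists_mul_lt_measure_inter [ProperSpace α] [IsFiniteMeasureOnCompacts μ]
    (h : IsDensityPoint μ s x) {c : ℝ≥0∞} (hc : c < 1) {ε : ℝ} (hε : 0 < ε) :
    ∃ r ∈ Ioo 0 ε, c * μ (closedBall x r) < μ (s ∩ closedBall x r) := by
  obtain ⟨r, hr, hrε⟩ := ((h.eventually (Ioi_mem_nhds hc)).and (Ioo_mem_nhdsGT hε)).exists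
  exact ⟨r, hrε, (ENNReal.lt_div_iff_mul_lt (Or.inr hc.ne_top)
    (Or.inl measure_closedBall_lt_top.ne)).1 hr⟩

theorem exists_subset_ae_eq_forall_isDensityPoint [BorelSpace α] [SecondCountableTopology α]
    [HasBesicovitchCovering α] (μ : Measure α) [IsLocallyFiniteMeasure μ] (hs : MeasurableSet s) :
    ∃ t ⊆ s, MeasurableSet t ∧ t =ᵐ[μ] s ∧ ∀ x ∈ t, IsDensityPoint μ t x := by
  have h := Besicovitch.ae_tendsto_measure_inter_div μ s
  rw [ae_restrict_iff' hs] at h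
  obtain ⟨N, hN, hNm, hN0⟩ := exists_measurable_superset_of_null (ae_iff.1 h)
  have hae : s \ N =ᵐ[μ] s := sdiff_ae_eq_self.2 (measure_mono_null inter_subset_right hN0)
  refine ⟨s \ N, sdiff_subset, hs.diff hNm, hae, fun x hx => ?_⟩
  have hdens : IsDensityPoint μ s x := by_contra fun hx' => hx.2 (hN fun h => hx' (h hx.1))
  exact hdens.congr_ae hae.symm

end DensityPoint

theorem IsDensityPoint.volume_inter_Ioo_prod_Ioo_ne_zero {s : Set (ℝ × ℝ)} {p : ℝ × ℝ}
    (h : IsDensityPoint volume s p) {ε : ℝ} (hε : 0 < ε) :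
    volume (s ∩ Ioo p.1 (p.1 + ε) ×ˢ Ioo p.2 (p.2 + ε)) ≠ 0 := by
  obtain ⟨a, b⟩ := p
  -- `Q` below is a quarter of the square `closedBall (a, b) r`, so density above `3/4`
  -- forces `s` to meet it.
  obtain ⟨r, ⟨hr, hrε⟩, hdens⟩ := h.exists_mul_lt_measure_inter (c := 3 / 4)
    (ENNReal.div_lt_of_lt_mul' (by norm_num)) hε
  set Q := Ioo a (a + r) ×ˢ Ioo b (b + r)
  have hQB : Q ⊆ closedBall (a, b) r := by
    rw [← closedBall_prod_same, Real.closedBall_eq_Icc, Real.closedBall_eq_Icc]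
    exact prod_mono (Ioo_subset_Icc_self.trans (Icc_subset_Icc (by linarith) le_rfl))
      (Ioo_subset_Icc_self.trans (Icc_subset_Icc (by linarith) le_rfl))
  have hB : volume (closedBall (a, b) r) = 4 * volume Q := by
    rw [← closedBall_prod_same, Measure.volume_eq_prod, Measure.prod_prod, Measure.prod_prod,
      Real.volume_closedBall, Real.volume_closedBall, Real.volume_Ioo, Real.volume_Ioo,
      add_sub_cancel_left, add_sub_cancel_left, ENNReal.ofReal_mul zero_le_two]
    simp only [ENNReal.ofReal_ofNat]
    ring
  have hQ : volume (s ∩ Q) ≠ 0 := by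
    refine measure_inter_ne_zero_of_lt_add (measurableSet_Ioo.prod measurableSet_Ioo) hQB ?_
    calc volume (closedBall (a, b) r) = volume Q + 3 / 4 * volume (closedBall (a, b) r) := by
          rw [hB, ← mul_assoc, ENNReal.div_mul_cancel (by norm_num) (by norm_num)]
          ring
      _ < volume Q + volume (s ∩ closedBall (a, b) r) :=
          ENNReal.add_lt_add_left (measure_ne_top_of_subset hQB measure_closedBall_lt_top.ne) hdens
  exact fun h0 => hQ (measure_mono_null (inter_subset_inter_right _ (prod_mono
    (Ioo_subset_Ioo_right (by linarith)) (Ioo_subset_Ioo_right (by linarith)))) h0)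

theorem exists_prod_pair_subset_of_lt_volume_inter {E : Set (ℝ × ℝ)} (hE : MeasurableSet E)
    {I J : Set ℝ} (h : volume I * volume J / 2 < volume (E ∩ I ×ˢ J)) :
    ∃ x₁ x₂ y₁ y₂, x₁ < x₂ ∧ y₁ < y₂ ∧ {x₁, x₂} ×ˢ {y₁, y₂} ⊆ E := by
  set m : ℝ → ℝ≥0∞ := fun x => volume.restrict J (Prod.mk x ⁻¹' E)
  have hm : Measurable m := measurable_measure_prodMk_left hE
  have hG : volume.restrict I {x | volume J / 2 < m x} ≠ 0 := by
    intro h0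
    have hle : ∀ᵐ x ∂volume.restrict I, m x ≤ volume J / 2 := by
      simpa only [ae_iff, not_le] using h0
    refine h.not_ge ?_
    calc volume (E ∩ I ×ˢ J) = ∫⁻ x in I, m x := by
          rw [← Measure.restrict_apply hE, Measure.volume_eq_prod, ← Measure.prod_restrict,
            Measure.prod_apply hE]
      _ ≤ ∫⁻ _ in I, volume J / 2 := lintegral_mono_ae hle
      _ = volume I * volume J / 2 := by rw [setLIntegral_const, mul_comm, mul_div_assoc]
  obtain ⟨x₁, hx₁, x₂, hx₂, hx⟩ := exists_lt_of_measure_ne_zero hG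
  have hy : volume.restrict J (Prod.mk x₁ ⁻¹' E ∩ Prod.mk x₂ ⁻¹' E) ≠ 0 := by
    refine measure_inter_ne_zero_of_lt_add (hE.preimage measurable_prodMk_left) (subset_univ _) ?_
    rw [inter_univ, Measure.restrict_apply_univ, ← ENNReal.add_halves (volume J)]
    exact ENNReal.add_lt_add hx₂ hx₁
  obtain ⟨y₁, hy₁, y₂, hy₂, hy⟩ := exists_lt_of_measure_ne_zero hy
  refine ⟨x₁, x₂, y₁, y₂, hx, hy, ?_⟩
  rintro ⟨x, y⟩ ⟨rfl | rfl, rfl | rfl⟩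
  exacts [hy₁.1, hy₂.1, hy₁.2, hy₂.2]

theorem exists_rectangle_corners_subset {P : Set (ℝ × ℝ)} (hP : MeasurableSet P)
    (h : volume P ≠ 0) : ∃ x₁ x₂ y₁ y₂, x₁ < x₂ ∧ y₁ < y₂ ∧ {x₁, x₂} ×ˢ {y₁, y₂} ⊆ P ∧
      volume (P ∩ Ioo x₁ x₂ ×ˢ Ioo y₁ y₂) ≠ 0 := by
  obtain ⟨E, hEP, hE, hEae, hdens⟩ := exists_subset_ae_eq_forall_isDensityPoint volume hP
  obtain ⟨⟨a, b⟩, hp⟩ := nonempty_of_measure_ne_zero (by rwa [measure_congr hEae])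
  obtain ⟨r, -, hr⟩ := (hdens _ hp).exists_mul_lt_measure_inter (c := 2⁻¹)
    (by norm_num) one_pos
  rw [← closedBall_prod_same, Measure.volume_eq_prod, Measure.prod_prod,
    ← ENNReal.div_eq_inv_mul, ← Measure.volume_eq_prod] at hr
  obtain ⟨x₁, x₂, y₁, y₂, hx, hy, hsub⟩ := exists_prod_pair_subset_of_lt_volume_inter hE hr
  refine ⟨x₁, x₂, y₁, y₂, hx, hy, hsub.trans hEP, fun h0 => ?_⟩
  refine (hdens (x₁, y₁) (hsub (by simp))).volume_inter_Ioo_prod_Ioo_ne_zero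
    (lt_min (sub_pos.2 hx) (sub_pos.2 hy)) (measure_mono_null ?_ h0)
  have := min_le_left (x₂ - x₁) (y₂ - y₁)
  have := min_le_right (x₂ - x₁) (y₂ - y₁)
  exact inter_subset_inter hEP
    (prod_mono (Ioo_subset_Ioo_right (by linarith)) (Ioo_subset_Ioo_right (by linarith)))

theorem stmt_17_general
    (μ : Measure (ℝ × ℝ)) [IsProbabilityMeasure μ]
    (FX FY : ℝ → ℝ)
    (hFX : ∀ x, FX x = (μ (Iic x ×ˢ (univ : Set ℝ))).toReal)
    (hFY : ∀ y, FY y = (μ ((univ : Set ℝ) ×ˢ Iic y)).toReal)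
    (S : Set (ℝ × ℝ))
    (hSclosed : IsClosed S) (hSfull : μ Sᶜ = 0)
    (μac μsing : Measure (ℝ × ℝ))
    (hdecomp : μ = μac + μsing)
    (hac : μac ≪ (volume : Measure (ℝ × ℝ)))
    (hne : μac ≠ 0) :
    ¬ ∃ (f g : ℝ → ℝ) (c : ℝ), ∀ p ∈ S, FX p.1 * FY p.2 - f p.1 - g p.2 = c := by
  rintro ⟨f, g, c, hfg⟩
  have hle : μac ≤ μ := hdecomp ▸ Measure.le_add_right le_rfl
  have := isFiniteMeasure_of_le μ hle
  obtain ⟨P, hPS, hP, hP0, hPac⟩ := Measure.exists_subset_restrict_absolutelyContinuous hac hne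
    hSclosed.measurableSet (Measure.absolutelyContinuous_of_le hle hSfull)
  obtain ⟨x₁, x₂, y₁, y₂, -, -, hcorners, hPR⟩ := exists_rectangle_corners_subset hP hP0
  have hR : μ (Ioo x₁ x₂ ×ˢ Ioo y₁ y₂) ≠ 0 := fun h0 => hPR <| by
    rw [inter_comm, ← Measure.restrict_apply' hP]
    exact hPac (Measure.absolutelyContinuous_of_le hle h0)
  have hX : FX x₁ < FX x₂ := by
    simp only [hFX, prod_univ, ← Measure.fst_apply measurableSet_Iic]
    refine toReal_measure_Iic_lt_of_measure_Ioo_ne_zero ?_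
    rw [Measure.fst_apply measurableSet_Ioo, ← prod_univ]
    exact fun h0 => hR (measure_mono_null (prod_mono subset_rfl (subset_univ _)) h0)
  have hY : FY y₁ < FY y₂ := by
    simp only [hFY, univ_prod, ← Measure.snd_apply measurableSet_Iic]
    refine toReal_measure_Iic_lt_of_measure_Ioo_ne_zero ?_
    rw [Measure.snd_apply measurableSet_Ioo, ← univ_prod]
    exact fun h0 => hR (measure_mono_null (prod_mono (subset_univ _) subset_rfl) h0)
  have hcorner (x : ℝ) (hx : x ∈ ({x₁, x₂} : Set ℝ)) (y : ℝ) (hy : y ∈ ({y₁, y₂} : Set ℝ)) :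
      FX x * FY y - f x - g y = c :=
    hfg (x, y) (hPS (hcorners (mk_mem_prod hx hy)))
  have h₁₁ := hcorner x₁ (by simp) y₁ (by simp)
  have h₁₂ := hcorner x₁ (by simp) y₂ (by simp)
  have h₂₁ := hcorner x₂ (by simp) y₁ (by simp)
  have h₂₂ := hcorner x₂ (by simp) y₂ (by simp)
  nlinarith [mul_pos (sub_pos.2 hX) (sub_pos.2 hY)]

theorem stmt_17
    (μ : Measure (ℝ × ℝ)) [IsProbabilityMeasure μ]
    (FX FY : ℝ → ℝ)
    (hFX : ∀ x, FX x = (μ (Iic x ×ˢ (univ : Set ℝ))).toReal)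
    (hFY : ∀ y, FY y = (μ ((univ : Set ℝ) ×ˢ Iic y)).toReal)
    (hFXcont : Continuous FX) (hFYcont : Continuous FY)
    (S : Set (ℝ × ℝ))
    (hSclosed : IsClosed S) (hSfull : μ Sᶜ = 0)
    (hSmin : ∀ T : Set (ℝ × ℝ), IsClosed T → μ Tᶜ = 0 → S ⊆ T)
    (μac μsing : Measure (ℝ × ℝ))
    (hdecomp : μ = μac + μsing)
    (hac : μac ≪ (volume : Measure (ℝ × ℝ)))
    (hsing : μsing ⟂ₘ (volume : Measure (ℝ × ℝ)))
    (hne : μac ≠ 0) :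
    ¬ ∃ (f g : ℝ → ℝ) (c : ℝ), ∀ p ∈ S, FX p.1 * FY p.2 - f p.1 - g p.2 = c :=
  stmt_17_general μ FX FY hFX hFY S hSclosed hSfull μac μsing hdecomp hac hne
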